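/- In the free 3-step nilpotent group G on X, Y, for any word w = X^{s_1}Y^{t_1}⋯X^{s_N}Y^{t_N} with s_i, t_j ≥ 0 and Σs_i = Σt_j = 1, the value |w| never equals X + Y; i.e., X + Y is not expressible as such a product, even though it is a limit of such products. -/
import Mathlib


/-- The free 3-step nilpotent Lie algebra on two generators, in coordinates with
respect to the basis `X, Y, (1/2)[X,Y], (1/12)[X,[X,Y]], (1/12)[Y,[Y,X]]`. -/
abbrev G5 : Type := ℝ × ℝ × ℝ × ℝ × ℝ

/-- The Lie bracket in these coordinates. -/
noncomputable def br (a b : G5) : G5 :=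
  (0, 0, 2 * (a.1 * b.2.1 - a.2.1 * b.1), 6 * (a.1 * b.2.2.1 - a.2.2.1 * b.1),
    -6 * (a.2.1 * b.2.2.1 - a.2.2.1 * b.2.1))

/-- The group law given by the truncated BCH formula. -/
noncomputable def gmul (a b : G5) : G5 :=
  a + b + (1/2 : ℝ) • br a b + (1/12 : ℝ) • br a (br a b) + (1/12 : ℝ) • br b (br b a)

noncomputable def Xg : G5 := (1, 0, 0, 0, 0)

noncomputable def Yg : G5 := (0, 1, 0, 0, 0)

/-- The value of the word `X^{s₁} Y^{t₁} ⋯ X^{s_N} Y^{t_N}` encoded by a list of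
pairs of exponents. -/
noncomputable def wordProd (l : List (ℝ × ℝ)) : G5 :=
  l.foldl (fun g p => gmul (gmul g (p.1 • Xg)) (p.2 • Yg)) 0

lemma stepX (x y z u v s : ℝ) : gmul (x,y,z,u,v) (s • Xg) =
    (x+s, y, z - y*s, u - 3*z*s - x*y*s + y*s^2, v + y^2*s) := by
  simp [gmul, br, Xg, Prod.ext_iff]
  constructor <;> [skip; constructor] <;> ring

lemma stepY (x y z u v t : ℝ) : gmul (x,y,z,u,v) (t • Yg) =
    (x, y+t, z + x*t, u + x^2*t, v + 3*z*t - x*y*t + t^2*x) := by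
  simp [gmul, br, Yg, Prod.ext_iff]
  constructor <;> [skip; ring]
  ring

noncomputable def Psi (g : G5) : ℝ :=
  g.2.2.2.1 + g.2.2.2.2 + 3*g.2.2.1*(g.1 - g.2.1) + (g.1 + g.2.1)*(g.1 - g.2.1)^2

lemma stepPsi (x y z u v s t : ℝ) (hs : 0 ≤ s) (ht : 0 ≤ t) :
    Psi (x,y,z,u,v) + s^3/4 ≤ Psi (gmul (gmul (x,y,z,u,v) (s • Xg)) (t • Yg)) := by
  rw [stepX, stepY, Psi, Psi]
  simp only
  nlinarith [mul_nonneg hs (sq_nonneg (x - y + s/2)), mul_nonneg ht (sq_nonneg (x - y + s - t/2)),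
    mul_nonneg (mul_nonneg ht ht) ht]

lemma foldPsi (l : List (ℝ × ℝ)) (hpos : ∀ p ∈ l, 0 ≤ p.1 ∧ 0 ≤ p.2) (g : G5) :
    Psi g + (l.map (fun p => p.1^3)).sum / 4 ≤
      Psi (l.foldl (fun g p => gmul (gmul g (p.1 • Xg)) (p.2 • Yg)) g) := by
  induction l generalizing g with
  | nil => simp
  | cons p l ih =>
    obtain ⟨x, y, z, u, v⟩ := g
    have h1 := stepPsi x y z u v p.1 p.2 (hpos p (by simp)).1 (hpos p (by simp)).2
    have h2 := ih (fun q hq => hpos q (by simp [hq])) (gmul (gmul (x,y,z,u,v) (p.1 • Xg)) (p.2 • Yg))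
    simp only [List.foldl_cons, List.map_cons, List.sum_cons]
    linarith

theorem X_add_Y_not_a_word_value (l : List (ℝ × ℝ))
    (hpos : ∀ p ∈ l, 0 ≤ p.1 ∧ 0 ≤ p.2)
    (hs : (l.map Prod.fst).sum = 1) (ht : (l.map Prod.snd).sum = 1) :
    wordProd l ≠ Xg + Yg := by
  intro h
  -- some exponent is positive
  have hex : ∃ p ∈ l, 0 < p.1 := by
    by_contra hc
    push_neg at hc
    have : (l.map Prod.fst).sum = 0 := by
      apply List.sum_eq_zero
      intro x hx
      obtain ⟨p, hp, rfl⟩ := List.mem_map.1 hx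
      exact le_antisymm (hc p hp) (hpos p hp).1
    linarith
  obtain ⟨p, hp, hppos⟩ := hex
  have hsum : 0 < (l.map (fun p => p.1^3)).sum := by
    have hmem : p.1^3 ∈ l.map (fun p => p.1^3) := List.mem_map.2 ⟨p, hp, rfl⟩
    have := List.single_le_sum (l := l.map (fun p => p.1^3))
      (fun x hx => by obtain ⟨q, hq, rfl⟩ := List.mem_map.1 hx; exact pow_nonneg (hpos q hq).1 3) _ hmem
    have h3 := pow_pos hppos 3
    linarith
  have key := foldPsi l hpos 0
  have h0 : Psi (0 : G5) = 0 := by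
    simp [Psi, Prod.fst_zero, Prod.snd_zero]
  have hXY : Psi (Xg + Yg) = 0 := by
    simp [Psi, Xg, Yg]
  rw [wordProd] at h
  rw [h, hXY, h0] at key
  linarith
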